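/- arXiv:cs/0608001 — 3 statements merged into one kernel-verified Lean document; each statement's English description precedes it below -/
import Mathlib

section
/- The equations (x ∥ y) ∥ z = x ∥ (y ∥ z), x ∥ y = y ∥ x, and x ∥ 0 = x are derivable by equational logic from the axiom system consisting of A1–A4 (commutativity, associativity, idempotence of +, and x + 0 = x), L1–L5 (0 ⌊ x = 0; α.x ⌊ y = α.(x ∥ y); (x+y) ⌊ z = x ⌊ z + y ⌊ z; (x ⌊ y) ⌊ z = x ⌊ (y ∥ z); x ⌊ 0 = x), C1–C7 (0 | x = 0; a.x | b.y = γ(a,b).(x ∥ y) if γ(a,b) defined; a.x | b.y = 0 if γ(a,b) undefined; (x+y) | z = x | z + y | z; x | y = y | x; (x | y) | z = x | (y | z); (x ⌊ y) | z = (x | z) ⌊ y), and P1 (x ∥ y = (x ⌊ y + y ⌊ x) + x | y). -/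
/-- A partial communication function: `γ a b = some c` means communication of
`a` and `b` is defined with result `c` (where `c : Option A`, `none` meaning τ). -/
abbrev Comm (A : Type) := A → A → Option (Option A)

/-- Open process terms, with variables indexed by ℕ. -/
inductive PT (A : Type) : Type where
  | var : ℕ → PT A
  | nil : PT A
  | pre : Option A → PT A → PT A
  | add : PT A → PT A → PT A
  | lmerge : PT A → PT A → PT A
  | cmerge : PT A → PT A → PT A
  | par : PT A → PT A → PT A

/-- Substitution on open terms. -/
def substPT {A : Type} (σ : ℕ → PT A) : PT A → PT A
  | .var x => σ x
  | .nil => .nil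
  | .pre α P => .pre α (substPT σ P)
  | .add P Q => .add (substPT σ P) (substPT σ Q)
  | .lmerge P Q => .lmerge (substPT σ P) (substPT σ Q)
  | .cmerge P Q => .cmerge (substPT σ P) (substPT σ Q)
  | .par P Q => .par (substPT σ P) (substPT σ Q)

/-- Derivability in equational logic from a set of axioms `Ax`. -/
inductive Deriv {A : Type} (Ax : PT A → PT A → Prop) : PT A → PT A → Prop where
  | ax {P Q : PT A} (σ : ℕ → PT A) : Ax P Q → Deriv Ax (substPT σ P) (substPT σ Q)
  | refl (P : PT A) : Deriv Ax P P
  | symm {P Q} : Deriv Ax P Q → Deriv Ax Q P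
  | trans {P Q R} : Deriv Ax P Q → Deriv Ax Q R → Deriv Ax P R
  | pre (α) {P Q} : Deriv Ax P Q → Deriv Ax (.pre α P) (.pre α Q)
  | add {P P' Q Q'} : Deriv Ax P P' → Deriv Ax Q Q' → Deriv Ax (.add P Q) (.add P' Q')
  | lmerge {P P' Q Q'} : Deriv Ax P P' → Deriv Ax Q Q' → Deriv Ax (.lmerge P Q) (.lmerge P' Q')
  | cmerge {P P' Q Q'} : Deriv Ax P P' → Deriv Ax Q Q' → Deriv Ax (.cmerge P Q) (.cmerge P' Q')
  | par {P P' Q Q'} : Deriv Ax P P' → Deriv Ax Q Q' → Deriv Ax (.par P Q) (.par P' Q')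

/-- The axioms A1–A4, L1–L5, C1–C7 and P1 of Table 2. -/
inductive CcsAx {A : Type} (γ : Comm A) : PT A → PT A → Prop where
  | A1 : CcsAx γ (.add (.var 0) (.var 1)) (.add (.var 1) (.var 0))
  | A2 : CcsAx γ (.add (.add (.var 0) (.var 1)) (.var 2)) (.add (.var 0) (.add (.var 1) (.var 2)))
  | A3 : CcsAx γ (.add (.var 0) (.var 0)) (.var 0)
  | A4 : CcsAx γ (.add (.var 0) .nil) (.var 0)
  | L1 : CcsAx γ (.lmerge .nil (.var 0)) .nil
  | L2 (α : Option A) : CcsAx γ (.lmerge (.pre α (.var 0)) (.var 1)) (.pre α (.par (.var 0) (.var 1)))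
  | L3 : CcsAx γ (.lmerge (.add (.var 0) (.var 1)) (.var 2))
      (.add (.lmerge (.var 0) (.var 2)) (.lmerge (.var 1) (.var 2)))
  | L4 : CcsAx γ (.lmerge (.lmerge (.var 0) (.var 1)) (.var 2)) (.lmerge (.var 0) (.par (.var 1) (.var 2)))
  | L5 : CcsAx γ (.lmerge (.var 0) .nil) (.var 0)
  | C1 : CcsAx γ (.cmerge .nil (.var 0)) .nil
  | C2 {a b : A} {c : Option A} : γ a b = some c →
      CcsAx γ (.cmerge (.pre (some a) (.var 0)) (.pre (some b) (.var 1))) (.pre c (.par (.var 0) (.var 1)))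
  | C3 {a b : A} : γ a b = none →
      CcsAx γ (.cmerge (.pre (some a) (.var 0)) (.pre (some b) (.var 1))) .nil
  | C4 : CcsAx γ (.cmerge (.add (.var 0) (.var 1)) (.var 2))
      (.add (.cmerge (.var 0) (.var 2)) (.cmerge (.var 1) (.var 2)))
  | C5 : CcsAx γ (.cmerge (.var 0) (.var 1)) (.cmerge (.var 1) (.var 0))
  | C6 : CcsAx γ (.cmerge (.cmerge (.var 0) (.var 1)) (.var 2)) (.cmerge (.var 0) (.cmerge (.var 1) (.var 2)))
  | C7 : CcsAx γ (.cmerge (.lmerge (.var 0) (.var 1)) (.var 2)) (.lmerge (.cmerge (.var 0) (.var 2)) (.var 1))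
  | P1 : CcsAx γ (.par (.var 0) (.var 1))
      (.add (.add (.lmerge (.var 0) (.var 1)) (.lmerge (.var 1) (.var 0))) (.cmerge (.var 0) (.var 1)))

section Aux

variable {A : Type} {γ : Comm A}

private lemma dA1 (P Q : PT A) : Deriv (CcsAx γ) (P.add Q) (Q.add P) :=
  Deriv.ax (fun n => match n with | 0 => P | _ => Q) CcsAx.A1

private lemma dA2 (P Q R : PT A) :
    Deriv (CcsAx γ) ((P.add Q).add R) (P.add (Q.add R)) :=
  Deriv.ax (fun n => match n with | 0 => P | 1 => Q | _ => R) CcsAx.A2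

private lemma dA4 (P : PT A) : Deriv (CcsAx γ) (P.add .nil) P :=
  Deriv.ax (fun _ => P) CcsAx.A4

private lemma dL1 (P : PT A) : Deriv (CcsAx γ) (PT.lmerge .nil P) .nil :=
  Deriv.ax (fun _ => P) CcsAx.L1

private lemma dL3 (P Q R : PT A) :
    Deriv (CcsAx γ) ((P.add Q).lmerge R) ((P.lmerge R).add (Q.lmerge R)) :=
  Deriv.ax (fun n => match n with | 0 => P | 1 => Q | _ => R) CcsAx.L3

private lemma dL4 (P Q R : PT A) :
    Deriv (CcsAx γ) ((P.lmerge Q).lmerge R) (P.lmerge (Q.par R)) :=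
  Deriv.ax (fun n => match n with | 0 => P | 1 => Q | _ => R) CcsAx.L4

private lemma dL5 (P : PT A) : Deriv (CcsAx γ) (P.lmerge .nil) P :=
  Deriv.ax (fun _ => P) CcsAx.L5

private lemma dC1 (P : PT A) : Deriv (CcsAx γ) (PT.cmerge .nil P) .nil :=
  Deriv.ax (fun _ => P) CcsAx.C1

private lemma dC4 (P Q R : PT A) :
    Deriv (CcsAx γ) ((P.add Q).cmerge R) ((P.cmerge R).add (Q.cmerge R)) :=
  Deriv.ax (fun n => match n with | 0 => P | 1 => Q | _ => R) CcsAx.C4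

private lemma dC5 (P Q : PT A) : Deriv (CcsAx γ) (P.cmerge Q) (Q.cmerge P) :=
  Deriv.ax (fun n => match n with | 0 => P | _ => Q) CcsAx.C5

private lemma dC6 (P Q R : PT A) :
    Deriv (CcsAx γ) ((P.cmerge Q).cmerge R) (P.cmerge (Q.cmerge R)) :=
  Deriv.ax (fun n => match n with | 0 => P | 1 => Q | _ => R) CcsAx.C6

private lemma dC7 (P Q R : PT A) :
    Deriv (CcsAx γ) ((P.lmerge Q).cmerge R) ((P.cmerge R).lmerge Q) :=
  Deriv.ax (fun n => match n with | 0 => P | 1 => Q | _ => R) CcsAx.C7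

private lemma dP1 (P Q : PT A) :
    Deriv (CcsAx γ) (P.par Q)
      (((P.lmerge Q).add (Q.lmerge P)).add (P.cmerge Q)) :=
  Deriv.ax (fun n => match n with | 0 => P | _ => Q) CcsAx.P1

private lemma dComm (P Q : PT A) : Deriv (CcsAx γ) (P.par Q) (Q.par P) :=
  ((dP1 P Q).trans (Deriv.add (dA1 _ _) (dC5 P Q))).trans (dP1 Q P).symm

private lemma dNilUnit (P : PT A) : Deriv (CcsAx γ) (P.par .nil) P :=
  ((dP1 P .nil).trans
    (Deriv.add (Deriv.add (dL5 P) (dL1 P)) ((dC5 P .nil).trans (dC1 P)))).trans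
    (((dA4 (P.add .nil)).trans (dA4 P)))

/-- Sum of a list of terms (right-nested, ending in `0`). -/
private def sumL {A : Type} : List (PT A) → PT A
  | [] => .nil
  | a :: l => .add a (sumL l)

private lemma dSingle (P : PT A) : Deriv (CcsAx γ) P (sumL [P]) :=
  (dA4 P).symm

private lemma dSumAppend (l1 l2 : List (PT A)) :
    Deriv (CcsAx γ) ((sumL l1).add (sumL l2)) (sumL (l1 ++ l2)) := by
  induction l1 with
  | nil =>
      show Deriv (CcsAx γ) ((PT.nil).add (sumL l2)) (sumL l2)
      exact (dA1 _ _).trans (dA4 _)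
  | cons a l ih =>
      show Deriv (CcsAx γ) ((a.add (sumL l)).add (sumL l2)) (a.add (sumL (l ++ l2)))
      exact (dA2 a (sumL l) (sumL l2)).trans (Deriv.add (Deriv.refl a) ih)

private lemma dGlue {P Q : PT A} {l1 l2 : List (PT A)}
    (h1 : Deriv (CcsAx γ) P (sumL l1)) (h2 : Deriv (CcsAx γ) Q (sumL l2)) :
    Deriv (CcsAx γ) (P.add Q) (sumL (l1 ++ l2)) :=
  (Deriv.add h1 h2).trans (dSumAppend l1 l2)

private lemma dSumPerm {l1 l2 : List (PT A)} (h : l1.Perm l2) :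
    Deriv (CcsAx γ) (sumL l1) (sumL l2) := by
  induction h with
  | nil => exact Deriv.refl _
  | cons a _ ih => exact Deriv.add (Deriv.refl a) ih
  | swap a b l =>
      show Deriv (CcsAx γ) (b.add (a.add (sumL l))) (a.add (b.add (sumL l)))
      exact ((dA2 b a (sumL l)).symm.trans
        (Deriv.add (dA1 b a) (Deriv.refl _))).trans (dA2 a b (sumL l))
  | trans _ _ ih1 ih2 => exact ih1.trans ih2

private lemma dAssoc (x y z : PT A) :
    Deriv (CcsAx γ) ((x.par y).par z) (x.par (y.par z)) := by
  set t1 := x.lmerge (y.par z) with ht1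
  set t2 := y.lmerge (x.par z) with ht2
  set t3 := z.lmerge (x.par y) with ht3
  set t4 := (x.cmerge y).lmerge z with ht4
  set t5 := (x.cmerge z).lmerge y with ht5
  set t6 := (y.cmerge z).lmerge x with ht6
  set t7 := x.cmerge (y.cmerge z) with ht7
  -- LHS components
  have hA : Deriv (CcsAx γ) ((x.par y).lmerge z) (sumL [t1, t2, t4]) := by
    have s1 : Deriv (CcsAx γ) ((x.par y).lmerge z)
        ((((x.lmerge y).add (y.lmerge x)).add (x.cmerge y)).lmerge z) :=
      Deriv.lmerge (dP1 x y) (Deriv.refl z)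
    have s2 := dL3 (γ := γ) ((x.lmerge y).add (y.lmerge x)) (x.cmerge y) z
    have s3 := Deriv.add (dL3 (γ := γ) (x.lmerge y) (y.lmerge x) z) (Deriv.refl ((x.cmerge y).lmerge z))
    have s4 : Deriv (CcsAx γ) ((((x.lmerge y).lmerge z).add ((y.lmerge x).lmerge z)).add
        ((x.cmerge y).lmerge z)) ((t1.add t2).add t4) :=
      Deriv.add (Deriv.add (dL4 x y z) (dL4 y x z)) (Deriv.refl _)
    exact (((s1.trans s2).trans s3).trans s4).trans
      (dGlue (dGlue (dSingle t1) (dSingle t2)) (dSingle t4))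
  have hB : Deriv (CcsAx γ) (z.lmerge (x.par y)) (sumL [t3]) := dSingle t3
  have hC : Deriv (CcsAx γ) ((x.par y).cmerge z) (sumL [t5, t6, t7]) := by
    have s1 : Deriv (CcsAx γ) ((x.par y).cmerge z)
        ((((x.lmerge y).add (y.lmerge x)).add (x.cmerge y)).cmerge z) :=
      Deriv.cmerge (dP1 x y) (Deriv.refl z)
    have s2 := dC4 (γ := γ) ((x.lmerge y).add (y.lmerge x)) (x.cmerge y) z
    have s3 := Deriv.add (dC4 (γ := γ) (x.lmerge y) (y.lmerge x) z) (Deriv.refl ((x.cmerge y).cmerge z))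
    have s4 : Deriv (CcsAx γ) ((((x.lmerge y).cmerge z).add ((y.lmerge x).cmerge z)).add
        ((x.cmerge y).cmerge z)) ((t5.add t6).add t7) :=
      Deriv.add (Deriv.add (dC7 x y z) (dC7 y x z)) (dC6 x y z)
    exact (((s1.trans s2).trans s3).trans s4).trans
      (dGlue (dGlue (dSingle t5) (dSingle t6)) (dSingle t7))
  have hL : Deriv (CcsAx γ) ((x.par y).par z) (sumL [t1, t2, t4, t3, t5, t6, t7]) :=
    (dP1 (x.par y) z).trans (dGlue (dGlue hA hB) hC)
  -- RHS components
  have hA' : Deriv (CcsAx γ) (x.lmerge (y.par z)) (sumL [t1]) := dSingle t1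
  have hB' : Deriv (CcsAx γ) ((y.par z).lmerge x) (sumL [t2, t3, t6]) := by
    have s1 : Deriv (CcsAx γ) ((y.par z).lmerge x)
        ((((y.lmerge z).add (z.lmerge y)).add (y.cmerge z)).lmerge x) :=
      Deriv.lmerge (dP1 y z) (Deriv.refl x)
    have s2 := dL3 (γ := γ) ((y.lmerge z).add (z.lmerge y)) (y.cmerge z) x
    have s3 := Deriv.add (dL3 (γ := γ) (y.lmerge z) (z.lmerge y) x) (Deriv.refl ((y.cmerge z).lmerge x))
    have s4 : Deriv (CcsAx γ) ((((y.lmerge z).lmerge x).add ((z.lmerge y).lmerge x)).add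
        ((y.cmerge z).lmerge x)) ((t2.add t3).add t6) :=
      Deriv.add (Deriv.add
        ((dL4 y z x).trans (Deriv.lmerge (Deriv.refl y) (dComm z x)))
        ((dL4 z y x).trans (Deriv.lmerge (Deriv.refl z) (dComm y x))))
        (Deriv.refl _)
    exact (((s1.trans s2).trans s3).trans s4).trans
      (dGlue (dGlue (dSingle t2) (dSingle t3)) (dSingle t6))
  have hC' : Deriv (CcsAx γ) (x.cmerge (y.par z)) (sumL [t4, t5, t7]) := by
    have s0 : Deriv (CcsAx γ) (x.cmerge (y.par z)) ((y.par z).cmerge x) := dC5 x (y.par z)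
    have s1 : Deriv (CcsAx γ) ((y.par z).cmerge x)
        ((((y.lmerge z).add (z.lmerge y)).add (y.cmerge z)).cmerge x) :=
      Deriv.cmerge (dP1 y z) (Deriv.refl x)
    have s2 := dC4 (γ := γ) ((y.lmerge z).add (z.lmerge y)) (y.cmerge z) x
    have s3 := Deriv.add (dC4 (γ := γ) (y.lmerge z) (z.lmerge y) x) (Deriv.refl ((y.cmerge z).cmerge x))
    have s4 : Deriv (CcsAx γ) ((((y.lmerge z).cmerge x).add ((z.lmerge y).cmerge x)).add
        ((y.cmerge z).cmerge x)) ((t4.add t5).add t7) :=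
      Deriv.add (Deriv.add
        ((dC7 y z x).trans (Deriv.lmerge (dC5 y x) (Deriv.refl z)))
        ((dC7 z y x).trans (Deriv.lmerge (dC5 z x) (Deriv.refl y))))
        (dC5 (y.cmerge z) x)
    exact ((((s0.trans s1).trans s2).trans s3).trans s4).trans
      (dGlue (dGlue (dSingle t4) (dSingle t5)) (dSingle t7))
  have hR : Deriv (CcsAx γ) (x.par (y.par z)) (sumL [t1, t2, t3, t6, t4, t5, t7]) :=
    (dP1 x (y.par z)).trans (dGlue (dGlue hA' hB') hC')
  have hperm : ([t1, t2, t4, t3, t5, t6, t7] : List (PT A)).Perm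
      [t1, t2, t3, t6, t4, t5, t7] := by
    refine .cons t1 (.cons t2 ?_)
    refine ((List.Perm.swap t3 t4 [t5, t6, t7]).trans ?_)
    refine .cons t3 ?_
    exact (List.Perm.cons t4 (List.Perm.swap t6 t5 [t7])).trans (List.Perm.swap t6 t4 [t5, t7])
  exact hL.trans ((dSumPerm hperm).trans hR.symm)

end Aux

/-- Associativity, commutativity of ∥ and x ∥ 0 = x are derivable from the
axioms of Table 2. -/
theorem par_monoid_derivable {A : Type} (γ : Comm A) :
    Deriv (CcsAx γ) (.par (.par (.var 0) (.var 1)) (.var 2)) (.par (.var 0) (.par (.var 1) (.var 2))) ∧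
    Deriv (CcsAx γ) (.par (.var 0) (.var 1)) (.par (.var 1) (.var 0)) ∧
    Deriv (CcsAx γ) (.par (.var 0) .nil) (.var 0) :=
  ⟨dAssoc _ _ _, dComm _ _, dNilUnit _⟩
end

section
/- The equation τ.x | y = 0 is derivable from the axioms in the base system (including P4: x∥0=x, C2: a.x | b.y = γ(a,b).(x∥y) when γ(a,b) is defined) together with the handshaking axiom H: x | (y | z) = 0, provided the action set Act is nonempty and γ is the CCS communication function (γ(a, ā) = τ). -/
/-- The axioms of Table 2 together with H : x | (y | z) = 0. -/
inductive HAx {A : Type} (γ : Comm A) : PT A → PT A → Prop where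
  | base {P Q} : CcsAx γ P Q → HAx γ P Q
  | H : HAx γ (.cmerge (.var 0) (.cmerge (.var 1) (.var 2))) .nil

open Classical in
/-- The CCS communication function determined by a complement bijection:
`γ a b = τ` if `b = ā`, undefined otherwise. -/
noncomputable def ccsComm {A : Type} (bar : A → A) : Comm A :=
  fun a b => if b = bar a then some none else none

def sub2 {A : Type} (P Q : PT A) : ℕ → PT A
  | 0 => P | 1 => Q | _ => .nil

def sub3 {A : Type} (P Q R : PT A) : ℕ → PT A
  | 0 => P | 1 => Q | 2 => R | _ => .nil

lemma derivP4 {A : Type} (γ : Comm A) (P : PT A) :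
    Deriv (HAx γ) (.par P .nil) P := by
  have h1 : Deriv (HAx γ) (.par P .nil)
      (.add (.add (.lmerge P .nil) (.lmerge .nil P)) (.cmerge P .nil)) :=
    Deriv.ax (sub2 P .nil) (HAx.base CcsAx.P1)
  have hL5 : Deriv (HAx γ) (.lmerge P .nil) P :=
    Deriv.ax (fun _ => P) (HAx.base CcsAx.L5)
  have hL1 : Deriv (HAx γ) (.lmerge .nil P) (.nil : PT A) :=
    Deriv.ax (fun _ => P) (HAx.base CcsAx.L1)
  have hC5 : Deriv (HAx γ) (.cmerge P .nil) (.cmerge .nil P) :=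
    Deriv.ax (sub2 P .nil) (HAx.base CcsAx.C5)
  have hC1 : Deriv (HAx γ) (.cmerge .nil P) (.nil : PT A) :=
    Deriv.ax (fun _ => P) (HAx.base CcsAx.C1)
  have h2 : Deriv (HAx γ) (.par P .nil) (.add (.add P .nil) .nil) :=
    h1.trans (Deriv.add (Deriv.add hL5 hL1) (hC5.trans hC1))
  have hA4 : Deriv (HAx γ) (.add P (.nil : PT A)) P :=
    Deriv.ax (fun _ => P) (HAx.base CcsAx.A4)
  have hA4' : Deriv (HAx γ) (.add (.add P .nil) (.nil : PT A)) (.add P .nil) :=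
    Deriv.ax (fun _ => .add P .nil) (HAx.base CcsAx.A4)
  exact h2.trans (hA4'.trans hA4)

/-- The equation τ.x | y = 0 is derivable from the axioms of Table 2
together with the handshaking axiom H, for the CCS communication function
on a nonempty action set. -/
theorem tau_cmerge_nil {A : Type} [Nonempty A] (bar : A → A)
    (hinv : ∀ a, bar (bar a) = a) (hne : ∀ a, bar a ≠ a) :
    Deriv (HAx (ccsComm bar)) (.cmerge (.pre none (.var 0)) (.var 1)) .nil := by
  obtain ⟨a⟩ := ‹Nonempty A›
  set γ := ccsComm bar
  have hc : γ a (bar a) = some none := by simp [γ, ccsComm]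
  -- τ.x | y = τ.(x ∥ 0) | y
  have s1 : Deriv (HAx γ) (.cmerge (.pre none (.var 0)) (.var 1))
      (.cmerge (.pre none (.par (.var 0) .nil)) (.var 1)) :=
    Deriv.cmerge (Deriv.pre none (Deriv.symm (derivP4 γ (.var 0)))) (Deriv.refl _)
  -- τ.(x ∥ 0) = a.x | ā.0  (C2)
  have s2 : Deriv (HAx γ)
      (.cmerge (.pre (some a) (.var 0)) (.pre (some (bar a)) .nil))
      (.pre none (.par (.var 0) .nil)) :=
    Deriv.ax (sub2 (.var 0) .nil) (HAx.base (CcsAx.C2 hc))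
  have s2' : Deriv (HAx γ) (.cmerge (.pre none (.par (.var 0) .nil)) (.var 1))
      (.cmerge (.cmerge (.pre (some a) (.var 0)) (.pre (some (bar a)) .nil)) (.var 1)) :=
    Deriv.cmerge (Deriv.symm s2) (Deriv.refl _)
  -- C6: (u|v)|w = u|(v|w)
  have s3 : Deriv (HAx γ)
      (.cmerge (.cmerge (.pre (some a) (.var 0)) (.pre (some (bar a)) .nil)) (.var 1))
      (.cmerge (.pre (some a) (.var 0)) (.cmerge (.pre (some (bar a)) .nil) (.var 1))) :=
    Deriv.ax (sub3 (.pre (some a) (.var 0)) (.pre (some (bar a)) .nil) (.var 1))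
      (HAx.base CcsAx.C6)
  -- H
  have s4 : Deriv (HAx γ)
      (.cmerge (.pre (some a) (.var 0)) (.cmerge (.pre (some (bar a)) .nil) (.var 1)))
      (.nil : PT A) :=
    Deriv.ax (sub3 (.pre (some a) (.var 0)) (.pre (some (bar a)) .nil) (.var 1)) HAx.H
  exact s1.trans (s2'.trans (s3.trans s4))
end

section
/- Assume Act is nonempty and γ is the CCS communication function. For every process term P there exists an H-normal form N such that P = N is derivable from the axioms A1–A4, L1–L5, C1–C7, P1 together with H: x | (y | z) = 0, and h(P) ≥ h(N). -/
/-- The height measure on process terms. -/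
def height {A : Type} : PT A → ℕ
  | .var _ => 1
  | .nil => 0
  | .pre _ P => height P + 1
  | .add P Q => max (height P) (height Q)
  | .lmerge P Q => height P + height Q
  | .cmerge P Q => height P + height Q
  | .par P Q => height P + height Q

/-- A term is simple if it is not 0 and not an alternative composition. -/
def SimplePT {A : Type} : PT A → Prop
  | .nil => False
  | .add _ _ => False
  | _ => True

/-- Summation of a list of terms (the empty summation is 0). -/
def listSum {A : Type} (l : List (PT A)) : PT A := l.foldr .add .nil

/-- H-normal forms: N ::= 0 | N+N | α.N | x⌊N | (x|a)⌊N | (x|y)⌊N. -/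
inductive IsHNF {A : Type} : PT A → Prop where
  | nil : IsHNF .nil
  | add {N₁ N₂ : PT A} : IsHNF N₁ → IsHNF N₂ → IsHNF (.add N₁ N₂)
  | pre (α : Option A) {N : PT A} : IsHNF N → IsHNF (.pre α N)
  | lmergeVar (x : ℕ) {N : PT A} : IsHNF N → IsHNF (.lmerge (.var x) N)
  | lmergeVarAct (x : ℕ) (a : A) {N : PT A} : IsHNF N →
      IsHNF (.lmerge (.cmerge (.var x) (.pre (some a) .nil)) N)
  | lmergeVarVar (x y : ℕ) {N : PT A} : IsHNF N →
      IsHNF (.lmerge (.cmerge (.var x) (.var y)) N)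

namespace HNFProof

variable {A : Type}

/-- substitution picking three terms -/
def sub3 (X Y Z : PT A) : ℕ → PT A
  | 0 => X
  | 1 => Y
  | _ => Z

/-- size measure for termination -/
def sz : PT A → ℕ
  | .var _ => 1
  | .nil => 1
  | .pre _ P => sz P + 1
  | .add P Q => sz P + sz Q + 1
  | .lmerge P Q => sz P + sz Q + 1
  | .cmerge P Q => sz P + sz Q + 1
  | .par P Q => sz P + sz Q + 1

abbrev HD (bar : A → A) : PT A → PT A → Prop := Deriv (HAx (ccsComm bar))

theorem hax {bar : A → A} {P Q : PT A} (h : CcsAx (ccsComm bar) P Q) (σ : ℕ → PT A) :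
    HD bar (substPT σ P) (substPT σ Q) := Deriv.ax σ (HAx.base h)

section Basic
variable (bar : A → A)

theorem dA1 (X Y : PT A) : HD bar (.add X Y) (.add Y X) := hax CcsAx.A1 (sub3 X Y Y)
theorem dA4 (X : PT A) : HD bar (.add X .nil) X := hax CcsAx.A4 (sub3 X X X)
theorem dL1 (X : PT A) : HD bar (.lmerge .nil X) .nil := hax CcsAx.L1 (sub3 X X X)
theorem dL2 (α : Option A) (X Y : PT A) :
    HD bar (.lmerge (.pre α X) Y) (.pre α (.par X Y)) := hax (CcsAx.L2 α) (sub3 X Y Y)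
theorem dL3 (X Y Z : PT A) :
    HD bar (.lmerge (.add X Y) Z) (.add (.lmerge X Z) (.lmerge Y Z)) := hax CcsAx.L3 (sub3 X Y Z)
theorem dL4 (X Y Z : PT A) :
    HD bar (.lmerge (.lmerge X Y) Z) (.lmerge X (.par Y Z)) := hax CcsAx.L4 (sub3 X Y Z)
theorem dL5 (X : PT A) : HD bar (.lmerge X .nil) X := hax CcsAx.L5 (sub3 X X X)
theorem dC1 (X : PT A) : HD bar (.cmerge .nil X) .nil := hax CcsAx.C1 (sub3 X X X)
theorem dC4 (X Y Z : PT A) :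
    HD bar (.cmerge (.add X Y) Z) (.add (.cmerge X Z) (.cmerge Y Z)) := hax CcsAx.C4 (sub3 X Y Z)
theorem dC5 (X Y : PT A) : HD bar (.cmerge X Y) (.cmerge Y X) := hax CcsAx.C5 (sub3 X Y Y)
theorem dC6 (X Y Z : PT A) :
    HD bar (.cmerge (.cmerge X Y) Z) (.cmerge X (.cmerge Y Z)) := hax CcsAx.C6 (sub3 X Y Z)
theorem dC7 (X Y Z : PT A) :
    HD bar (.cmerge (.lmerge X Y) Z) (.lmerge (.cmerge X Z) Y) := hax CcsAx.C7 (sub3 X Y Z)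
theorem dP1 (X Y : PT A) :
    HD bar (.par X Y) (.add (.add (.lmerge X Y) (.lmerge Y X)) (.cmerge X Y)) :=
  hax CcsAx.P1 (sub3 X Y Y)
theorem dH (X Y Z : PT A) : HD bar (.cmerge X (.cmerge Y Z)) .nil :=
  Deriv.ax (sub3 X Y Z) HAx.H
theorem dC2 (a : A) (X Y : PT A) :
    HD bar (.cmerge (.pre (some a) X) (.pre (some (bar a)) Y)) (.pre none (.par X Y)) :=
  hax (CcsAx.C2 (by simp [ccsComm])) (sub3 X Y Y)
theorem dC3 {a b : A} (h : b ≠ bar a) (X Y : PT A) :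
    HD bar (.cmerge (.pre (some a) X) (.pre (some b) Y)) .nil :=
  hax (CcsAx.C3 (by simp [ccsComm, h])) (sub3 X Y Y)

end Basic

section Composite
variable (bar : A → A)

open Deriv

/-- x ∥ 0 = x -/
theorem parNilR (X : PT A) : HD bar (.par X .nil) X := by
  refine (dP1 bar X .nil).trans ?_
  refine ((Deriv.add (Deriv.add (dL5 bar X) (dL1 bar X))
    ((dC5 bar X .nil).trans (dC1 bar X))).trans ?_)
  exact (Deriv.add (dA4 bar X) (Deriv.refl _)).trans (dA4 bar X)

/-- 0 ∥ x = x -/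
theorem parNilL (X : PT A) : HD bar (.par .nil X) X := by
  refine (dP1 bar .nil X).trans ?_
  refine ((Deriv.add (Deriv.add (dL1 bar X) (dL5 bar X)) (dC1 bar X)).trans ?_)
  refine (dA4 bar _).trans ?_
  exact (dA1 bar _ _).trans (dA4 bar X)

theorem cNilR (X : PT A) : HD bar (.cmerge X .nil) .nil :=
  (dC5 bar X .nil).trans (dC1 bar X)

/-- τ.P = a.P | ā.0 -/
theorem tauSplit (a : A) (P : PT A) :
    HD bar (.cmerge (.pre (some a) P) (.pre (some (bar a)) .nil)) (.pre none P) :=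
  (dC2 bar a P .nil).trans (Deriv.pre none (parNilR bar P))

/-- τ.P | X = 0 -/
theorem cTauL [Nonempty A] (P X : PT A) : HD bar (.cmerge (.pre none P) X) .nil := by
  obtain ⟨a⟩ := ‹Nonempty A›
  refine (Deriv.cmerge (Deriv.symm (tauSplit bar a P)) (Deriv.refl X)).trans ?_
  exact (dC5 bar _ _).trans (dH bar X _ _)

theorem cTauR [Nonempty A] (P X : PT A) : HD bar (.cmerge X (.pre none P)) .nil :=
  (dC5 bar _ _).trans (cTauL bar P X)

/-- ((u|w)⌊m) | x = 0 -/
theorem cCHeadL (U W M X : PT A) :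
    HD bar (.cmerge (.lmerge (.cmerge U W) M) X) .nil := by
  refine (dC7 bar _ M X).trans ?_
  refine (Deriv.lmerge ((dC6 bar U W X).trans (dH bar U W X)) (Deriv.refl M)).trans ?_
  exact dL1 bar M

theorem cCHeadR (U W M X : PT A) :
    HD bar (.cmerge X (.lmerge (.cmerge U W) M)) .nil :=
  (dC5 bar _ _).trans (cCHeadL bar U W M X)

/-- (x⌊M) | (b.N) = (x|b.0)⌊(N ∥ M) -/
theorem cVarPre (x : ℕ) (b : A) (M N : PT A) :
    HD bar (.cmerge (.lmerge (.var x) M) (.pre (some b) N))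
      (.lmerge (.cmerge (.var x) (.pre (some b) .nil)) (.par N M)) := by
  have hbn : HD bar (.lmerge (.pre (some b) .nil) N) (.pre (some b) N) :=
    (dL2 bar (some b) .nil N).trans (Deriv.pre _ (parNilL bar N))
  refine (dC7 bar (.var x) M (.pre (some b) N)).trans ?_
  have inner : HD bar (.cmerge (.var x) (.pre (some b) N))
      (.lmerge (.cmerge (.var x) (.pre (some b) .nil)) N) := by
    refine (Deriv.cmerge (Deriv.refl (.var x)) (Deriv.symm hbn)).trans ?_
    refine (dC5 bar _ _).trans ?_
    refine (dC7 bar _ N (.var x)).trans ?_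
    exact Deriv.lmerge (dC5 bar _ _) (Deriv.refl N)
  refine (Deriv.lmerge inner (Deriv.refl M)).trans ?_
  exact dL4 bar _ N M

/-- (x⌊M) | (y⌊N) = (y|x)⌊(N ∥ M) -/
theorem cVarVar (x y : ℕ) (M N : PT A) :
    HD bar (.cmerge (.lmerge (.var x) M) (.lmerge (.var y) N))
      (.lmerge (.cmerge (.var y) (.var x)) (.par N M)) := by
  refine (dC7 bar (.var x) M _).trans ?_
  have inner : HD bar (.cmerge (.var x) (.lmerge (.var y) N))
      (.lmerge (.cmerge (.var y) (.var x)) N) :=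
    (dC5 bar _ _).trans (dC7 bar (.var y) N (.var x))
  refine (Deriv.lmerge inner (Deriv.refl M)).trans ?_
  exact dL4 bar _ N M

end Composite

theorem sz_pos (P : PT A) : 1 ≤ sz P := by cases P <;> simp [sz]

theorem key [Nonempty A] (bar : A → A) (n : ℕ) :
    (∀ M N : PT A, IsHNF M → IsHNF N → 2 * (sz M + sz N) ≤ n →
      (∃ K, IsHNF K ∧ HD bar (.lmerge M N) K ∧ height K ≤ height M + height N) ∧
      (∃ K, IsHNF K ∧ HD bar (.cmerge M N) K ∧ height K ≤ height M + height N)) ∧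
    (∀ M N : PT A, IsHNF M → IsHNF N → 2 * (sz M + sz N) + 1 ≤ n →
      ∃ K, IsHNF K ∧ HD bar (.par M N) K ∧ height K ≤ height M + height N) := by
  induction n using Nat.strong_induction_on with
  | _ n IH =>
  -- recursive access to the par statement at smaller measure
  have Pr : ∀ M N : PT A, IsHNF M → IsHNF N → 2 * (sz M + sz N) + 1 < n →
      ∃ K, IsHNF K ∧ HD bar (.par M N) K ∧ height K ≤ height M + height N :=
    fun M N h1 h2 h3 => (IH _ h3).2 M N h1 h2 le_rfl
  have Rec : ∀ M N : PT A, IsHNF M → IsHNF N → 2 * (sz M + sz N) < n →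
      (∃ K, IsHNF K ∧ HD bar (.lmerge M N) K ∧ height K ≤ height M + height N) ∧
      (∃ K, IsHNF K ∧ HD bar (.cmerge M N) K ∧ height K ≤ height M + height N) :=
    fun M N h1 h2 h3 => (IH _ h3).1 M N h1 h2 le_rfl
  have main : ∀ M N : PT A, IsHNF M → IsHNF N → 2 * (sz M + sz N) ≤ n →
      (∃ K, IsHNF K ∧ HD bar (.lmerge M N) K ∧ height K ≤ height M + height N) ∧
      (∃ K, IsHNF K ∧ HD bar (.cmerge M N) K ∧ height K ≤ height M + height N) := by
    intro M N hM hN hsz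
    constructor
    · -- lmerge
      cases hM with
      | nil =>
        exact ⟨.nil, .nil, dL1 bar N, by simp [height]⟩
      | add h1 h2 =>
        rename_i M₁ M₂
        have s1 := sz_pos M₁; have s2 := sz_pos M₂
        simp only [sz] at hsz
        obtain ⟨K₁, hK₁, d₁, e₁⟩ := (Rec M₁ N h1 hN (by omega)).1
        obtain ⟨K₂, hK₂, d₂, e₂⟩ := (Rec M₂ N h2 hN (by omega)).1
        exact ⟨.add K₁ K₂, .add hK₁ hK₂,
          (dL3 bar M₁ M₂ N).trans (Deriv.add d₁ d₂), by simp [height]; omega⟩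
      | pre α h' =>
        rename_i M'
        simp only [sz] at hsz
        obtain ⟨K, hK, dK, eK⟩ := Pr M' N h' hN (by omega)
        exact ⟨.pre α K, .pre α hK,
          (dL2 bar α M' N).trans (Deriv.pre α dK), by simp [height]; omega⟩
      | lmergeVar x h' =>
        rename_i M'
        simp only [sz] at hsz
        have := sz_pos M'
        obtain ⟨K, hK, dK, eK⟩ := Pr M' N h' hN (by omega)
        exact ⟨.lmerge (.var x) K, .lmergeVar x hK,
          (dL4 bar (.var x) M' N).trans (Deriv.lmerge (Deriv.refl _) dK),
          by simp [height]; omega⟩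
      | lmergeVarAct x a h' =>
        rename_i M'
        simp only [sz] at hsz
        obtain ⟨K, hK, dK, eK⟩ := Pr M' N h' hN (by omega)
        exact ⟨.lmerge (.cmerge (.var x) (.pre (some a) .nil)) K, .lmergeVarAct x a hK,
          (dL4 bar _ M' N).trans (Deriv.lmerge (Deriv.refl _) dK),
          by simp [height]; omega⟩
      | lmergeVarVar x y h' =>
        rename_i M'
        simp only [sz] at hsz
        obtain ⟨K, hK, dK, eK⟩ := Pr M' N h' hN (by omega)
        exact ⟨.lmerge (.cmerge (.var x) (.var y)) K, .lmergeVarVar x y hK,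
          (dL4 bar _ M' N).trans (Deriv.lmerge (Deriv.refl _) dK),
          by simp [height]; omega⟩
    · -- cmerge
      cases hM with
      | nil =>
        exact ⟨.nil, .nil, dC1 bar N, by simp [height]⟩
      | add h1 h2 =>
        rename_i M₁ M₂
        have s1 := sz_pos M₁; have s2 := sz_pos M₂
        simp only [sz] at hsz
        obtain ⟨K₁, hK₁, d₁, e₁⟩ := (Rec M₁ N h1 hN (by omega)).2
        obtain ⟨K₂, hK₂, d₂, e₂⟩ := (Rec M₂ N h2 hN (by omega)).2
        exact ⟨.add K₁ K₂, .add hK₁ hK₂,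
          (dC4 bar M₁ M₂ N).trans (Deriv.add d₁ d₂), by simp [height]; omega⟩
      | pre α h' =>
        rename_i M'
        cases α with
        | none => exact ⟨.nil, .nil, cTauL bar M' N, by simp [height]⟩
        | some a =>
          cases hN with
          | nil => exact ⟨.nil, .nil, cNilR bar _, by simp [height]⟩
          | add h1 h2 =>
            rename_i N₁ N₂
            have s1 := sz_pos N₁; have s2 := sz_pos N₂
            simp only [sz] at hsz
            obtain ⟨K₁, hK₁, d₁, e₁⟩ := (Rec N₁ _ h1 (.pre (some a) h') (by simp only [sz]; omega)).2
            obtain ⟨K₂, hK₂, d₂, e₂⟩ := (Rec N₂ _ h2 (.pre (some a) h') (by simp only [sz]; omega)).2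
            exact ⟨.add K₁ K₂, .add hK₁ hK₂,
              ((dC5 bar _ _).trans (dC4 bar N₁ N₂ _)).trans (Deriv.add d₁ d₂),
              by simp [height] at e₁ e₂ ⊢; omega⟩
          | pre β h'' =>
            rename_i N'
            cases β with
            | none => exact ⟨.nil, .nil, cTauR bar N' _, by simp [height]⟩
            | some b =>
              by_cases hb : b = bar a
              · subst hb
                simp only [sz] at hsz
                obtain ⟨K, hK, dK, eK⟩ := Pr M' N' h' h'' (by omega)
                exact ⟨.pre none K, .pre none hK,
                  (dC2 bar a M' N').trans (Deriv.pre none dK), by simp [height]; omega⟩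
              · exact ⟨.nil, .nil, dC3 bar hb M' N', by simp [height]⟩
          | lmergeVar y h'' =>
            rename_i N'
            simp only [sz] at hsz
            obtain ⟨K, hK, dK, eK⟩ := Pr M' N' h' h'' (by omega)
            refine ⟨.lmerge (.cmerge (.var y) (.pre (some a) .nil)) K,
              .lmergeVarAct y a hK, ?_, by simp [height]; omega⟩
            refine (dC5 bar _ _).trans ((cVarPre bar y a N' M').trans ?_)
            exact Deriv.lmerge (Deriv.refl _) dK
          | lmergeVarAct y b h'' =>
            rename_i N'
            exact ⟨.nil, .nil, cCHeadR bar _ _ _ _, by simp [height]⟩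
          | lmergeVarVar y z h'' =>
            rename_i N'
            exact ⟨.nil, .nil, cCHeadR bar _ _ _ _, by simp [height]⟩
      | lmergeVar x h' =>
        rename_i M'
        cases hN with
        | nil => exact ⟨.nil, .nil, cNilR bar _, by simp [height]⟩
        | add h1 h2 =>
          rename_i N₁ N₂
          have s1 := sz_pos N₁; have s2 := sz_pos N₂
          simp only [sz] at hsz
          obtain ⟨K₁, hK₁, d₁, e₁⟩ := (Rec N₁ _ h1 (.lmergeVar x h') (by simp only [sz]; omega)).2
          obtain ⟨K₂, hK₂, d₂, e₂⟩ := (Rec N₂ _ h2 (.lmergeVar x h') (by simp only [sz]; omega)).2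
          exact ⟨.add K₁ K₂, .add hK₁ hK₂,
            ((dC5 bar _ _).trans (dC4 bar N₁ N₂ _)).trans (Deriv.add d₁ d₂),
            by simp [height] at e₁ e₂ ⊢; omega⟩
        | pre β h'' =>
          rename_i N'
          cases β with
          | none => exact ⟨.nil, .nil, cTauR bar N' _, by simp [height]⟩
          | some b =>
            simp only [sz] at hsz
            obtain ⟨K, hK, dK, eK⟩ := Pr N' M' h'' h' (by omega)
            refine ⟨.lmerge (.cmerge (.var x) (.pre (some b) .nil)) K,
              .lmergeVarAct x b hK, ?_, by simp [height]; omega⟩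
            exact (cVarPre bar x b M' N').trans (Deriv.lmerge (Deriv.refl _) dK)
        | lmergeVar y h'' =>
          rename_i N'
          simp only [sz] at hsz
          obtain ⟨K, hK, dK, eK⟩ := Pr N' M' h'' h' (by omega)
          refine ⟨.lmerge (.cmerge (.var y) (.var x)) K,
            .lmergeVarVar y x hK, ?_, by simp [height]; omega⟩
          exact (cVarVar bar x y M' N').trans (Deriv.lmerge (Deriv.refl _) dK)
        | lmergeVarAct y b h'' =>
          rename_i N'
          exact ⟨.nil, .nil, cCHeadR bar _ _ _ _, by simp [height]⟩
        | lmergeVarVar y z h'' =>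
          rename_i N'
          exact ⟨.nil, .nil, cCHeadR bar _ _ _ _, by simp [height]⟩
      | lmergeVarAct x a h' =>
        rename_i M'
        exact ⟨.nil, .nil, cCHeadL bar _ _ _ _, by simp [height]⟩
      | lmergeVarVar x y h' =>
        rename_i M'
        exact ⟨.nil, .nil, cCHeadL bar _ _ _ _, by simp [height]⟩
  refine ⟨main, ?_⟩
  intro M N hM hN hsz
  obtain ⟨K₁, hK₁, d₁, e₁⟩ := (main M N hM hN (by omega)).1
  obtain ⟨K₂, hK₂, d₂, e₂⟩ := (main N M hN hM (by omega)).1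
  obtain ⟨K₃, hK₃, d₃, e₃⟩ := (main M N hM hN (by omega)).2
  exact ⟨.add (.add K₁ K₂) K₃, .add (.add hK₁ hK₂) hK₃,
    (dP1 bar M N).trans (Deriv.add (Deriv.add d₁ d₂) d₃),
    by simp [height]; omega⟩

end HNFProof

/-- Every process term is provably (from Table 2 plus H) equal to an
H-normal form of no greater height. -/
theorem exists_hnf {A : Type} [Nonempty A] (bar : A → A)
    (hinv : ∀ a, bar (bar a) = a) (hne : ∀ a, bar a ≠ a) (P : PT A) :
    ∃ N : PT A, IsHNF N ∧ Deriv (HAx (ccsComm bar)) P N ∧ height N ≤ height P := by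
  induction P with
  | var x =>
    exact ⟨.lmerge (.var x) .nil, .lmergeVar x .nil,
      Deriv.symm (HNFProof.dL5 bar (.var x)), by simp [height]⟩
  | nil => exact ⟨.nil, .nil, Deriv.refl _, le_rfl⟩
  | pre α P ih =>
    obtain ⟨N, h1, d1, e1⟩ := ih
    exact ⟨.pre α N, .pre α h1, Deriv.pre α d1, by simp only [height]; omega⟩
  | add P Q ihP ihQ =>
    obtain ⟨N₁, h1, d1, e1⟩ := ihP; obtain ⟨N₂, h2, d2, e2⟩ := ihQ
    exact ⟨.add N₁ N₂, .add h1 h2, Deriv.add d1 d2, by simp only [height]; omega⟩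
  | lmerge P Q ihP ihQ =>
    obtain ⟨N₁, h1, d1, e1⟩ := ihP; obtain ⟨N₂, h2, d2, e2⟩ := ihQ
    obtain ⟨K, hK, dK, eK⟩ :=
      ((HNFProof.key bar (2 * (HNFProof.sz N₁ + HNFProof.sz N₂))).1 N₁ N₂ h1 h2 le_rfl).1
    exact ⟨K, hK, (Deriv.lmerge d1 d2).trans dK, by simp only [height]; omega⟩
  | cmerge P Q ihP ihQ =>
    obtain ⟨N₁, h1, d1, e1⟩ := ihP; obtain ⟨N₂, h2, d2, e2⟩ := ihQ
    obtain ⟨K, hK, dK, eK⟩ :=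
      ((HNFProof.key bar (2 * (HNFProof.sz N₁ + HNFProof.sz N₂))).1 N₁ N₂ h1 h2 le_rfl).2
    exact ⟨K, hK, (Deriv.cmerge d1 d2).trans dK, by simp only [height]; omega⟩
  | par P Q ihP ihQ =>
    obtain ⟨N₁, h1, d1, e1⟩ := ihP; obtain ⟨N₂, h2, d2, e2⟩ := ihQ
    obtain ⟨K, hK, dK, eK⟩ :=
      (HNFProof.key bar (2 * (HNFProof.sz N₁ + HNFProof.sz N₂) + 1)).2 N₁ N₂ h1 h2 le_rfl
    exact ⟨K, hK, (Deriv.par d1 d2).trans dK, by simp only [height]; omega⟩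
end
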